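/- For every h ∈ C↑_sur(b^ω), the subsets of Y_h order isomorphic to ℚ are exactly the sets Y_{f∘h} for f ∈ C↑_sur(b^ω): [Y_h]^η = {Y_{f∘h} : f ∈ C↑_sur(b^ω)}. -/

import Mathlib

noncomputable section
open Classical

/-- Lexicographic strict order on `ℕ → Fin b`. -/
def lexLT (b : ℕ) (x y : ℕ → Fin b) : Prop :=
  ∃ n, (∀ m, m < n → x m = y m) ∧ x n < y n

/-- Lexicographic order `≤_lex` on `ℕ → Fin b`. -/
def lexLE (b : ℕ) (x y : ℕ → Fin b) : Prop := x = y ∨ lexLT b x y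

def IsGreatestLex (b : ℕ) (S : Set (ℕ → Fin b)) (x : ℕ → Fin b) : Prop :=
  x ∈ S ∧ ∀ y ∈ S, lexLE b y x

def IsLeastLex (b : ℕ) (S : Set (ℕ → Fin b)) (x : ℕ → Fin b) : Prop :=
  x ∈ S ∧ ∀ y ∈ S, lexLE b x y

/-- `S` is an interval for the lexicographic order. -/
def LexInterval (b : ℕ) (S : Set (ℕ → Fin b)) : Prop :=
  ∀ x ∈ S, ∀ y ∈ S, ∀ z, lexLE b x z → lexLE b z y → z ∈ S

/-- The basic clopen set of sequences extending the finite sequence `s`. -/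
def W (b : ℕ) (s : List (Fin b)) : Set (ℕ → Fin b) :=
  {x | ∀ i, (hi : i < s.length) → x i = s.get ⟨i, hi⟩}

/-- Continuous nondecreasing surjections of `b^ω`, i.e. members of `C↑_sur(b^ω)`. -/
def CSur (b : ℕ) (f : (ℕ → Fin b) → (ℕ → Fin b)) : Prop :=
  Continuous f ∧ Function.Surjective f ∧ ∀ x y, lexLE b x y → lexLE b (f x) (f y)

/-- A filtering on `b^ω`. -/
def Filtering (b : ℕ) (U : List (Fin b) → Set (ℕ → Fin b)) : Prop :=
  (∀ s, (U s).Nonempty ∧ IsClopen (U s) ∧ LexInterval b (U s)) ∧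
  U [] = Set.univ ∧
  (∀ s, U s = ⋃ i : Fin b, U (s ++ [i])) ∧
  (∀ s, ∀ i j : Fin b, i ≠ j → Disjoint (U (s ++ [i])) (U (s ++ [j]))) ∧
  (∀ s, ∀ i j : Fin b, i < j → ∀ x y,
    IsGreatestLex b (U (s ++ [i])) x → IsGreatestLex b (U (s ++ [j])) y → lexLT b x y)

/-- `A_b`: sequences eventually equal to `b-1` (the top of `Fin b`), except the constant
top sequence (the lexicographic maximum of `b^ω`). -/
def AbSet (b : ℕ) : Set (ℕ → Fin b) :=
  {x | (∃ N, ∀ n, N ≤ n → ∀ j : Fin b, j ≤ x n) ∧ ¬ ∀ n, ∀ j : Fin b, j ≤ x n}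

/-- `Y` is order isomorphic to `ℚ` with respect to the lexicographic order. -/
def OrderIsoQ (b : ℕ) (Y : Set (ℕ → Fin b)) : Prop :=
  ∃ e : ℚ ≃ Y, ∀ p q : ℚ, p ≤ q ↔ lexLE b (e p).1 (e q).1

/-- `Y_f = {max f⁻¹(W_s) : s ∈ b^{<ω}} \ {max b^ω}`. -/
def Yset (b : ℕ) (f : (ℕ → Fin b) → (ℕ → Fin b)) : Set (ℕ → Fin b) :=
  {x | (∃ s : List (Fin b), IsGreatestLex b (f ⁻¹' W b s) x) ∧ ¬ ∀ n, ∀ j : Fin b, j ≤ x n}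

/-- The metric `ρ_b` on `b^ω`. -/
def rhoB (b : ℕ) (x y : ℕ → Fin b) : ℝ :=
  if h : x = y then 0 else (2 : ℝ) ^ (-(Nat.find (Function.ne_iff.mp h) : ℤ))

/-- The sup-metric `ρ_∞` on `C↑_sur(b^ω)`. -/
def rhoInf (b : ℕ) (f g : (ℕ → Fin b) → (ℕ → Fin b)) : ℝ :=
  ⨆ x, rhoB b (f x) (g x)

/-- `⌊log₂(1/ε)⌋ + 1`. -/
def kOf (ε : ℝ) : ℕ := ⌊Real.logb 2 (1 / ε)⌋₊ + 1

/-- The `l`-th odd tangent number `t_l = tan^{(2l-1)}(0)`. -/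
def oddTangent (l : ℕ) : ℝ := iteratedDeriv (2 * l - 1) Real.tan 0

/-- The lexicographically increasing enumeration of `b^k`: `sEnum b k hb i` is the
`i`-th element of `b^k` in lexicographic order (base-`b` digits, most significant first). -/
def sEnum (b k : ℕ) (hb : 0 < b) (i : ℕ) : List (Fin b) :=
  List.ofFn fun j : Fin k => (⟨i / b ^ (k - 1 - (j : ℕ)) % b, Nat.mod_lt _ hb⟩ : Fin b)

end

/-!
For every `g ∈ C↑_sur(b^ω)`, `g` maps `Y_g` order-isomorphically onto `A_b`: it sends
`max g⁻¹(W_s)` to `max W_s`, and the points `max W_s ≠ ⊤` are exactly `A_b`. Since `A_b` is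
countable, dense and without endpoints, `Y_g ≅ ℚ`; together with `Y_{f∘h} ⊆ Y_h` this gives `⊇`.

Conversely, let `Z ⊆ Y_h` and `φ : A_b ≃o Z`, extended by `φ ⊤ = ⊤`. Define `g x` digit by
digit: after the word `s`, the next digit is the least `d` with `x ≤ φ (max W_{s d})`. Then
`g⁻¹(W_s)` is a clopen interval with greatest element `φ (max W_s)`, so `g ∈ C↑_sur(b^ω)` and
`Y_g = φ(A_b) = Z`. Every point of `Z ⊆ Y_h` is the greatest element of a union of fibres of `h`,
so `g` is constant on the fibres of `h`; as `h` is a quotient map, `g = f ∘ h` with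
`f ∈ C↑_sur(b^ω)`.
-/

open Filter Function Topology

section LexOrder

variable {b : ℕ} {x y : ℕ → Fin b}

theorem lexLT_iff : lexLT b x y ↔ toLex x < toLex y := Iff.rfl

theorem lexLE_iff : lexLE b x y ↔ toLex x ≤ toLex y := by
  rw [le_iff_eq_or_lt, toLex_inj]
  exact Iff.rfl

theorem isGreatestLex_iff {S : Set (ℕ → Fin b)} :
    IsGreatestLex b S x ↔ IsGreatest (ofLex ⁻¹' S) (toLex x) :=
  ⟨fun h => ⟨h.1, fun _ hz => lexLE_iff.1 (h.2 _ hz)⟩,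
    fun h => ⟨h.1, fun _ hz => lexLE_iff.2 (h.2 hz)⟩⟩

theorem IsGreatestLex.unique {S : Set (ℕ → Fin b)} (hx : IsGreatestLex b S x)
    (hy : IsGreatestLex b S y) : x = y :=
  toLex_inj.1 ((isGreatestLex_iff.1 hx).unique (isGreatestLex_iff.1 hy))

theorem lexLE_refl (x : ℕ → Fin b) : lexLE b x x := Or.inl rfl

theorem lexLE_trans {z : ℕ → Fin b} (hxy : lexLE b x y) (hyz : lexLE b y z) : lexLE b x z :=
  lexLE_iff.2 ((lexLE_iff.1 hxy).trans (lexLE_iff.1 hyz))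

theorem lexLE_antisymm (hxy : lexLE b x y) (hyx : lexLE b y x) : x = y :=
  toLex_inj.1 ((lexLE_iff.1 hxy).antisymm (lexLE_iff.1 hyx))

theorem lexLE_total (x y : ℕ → Fin b) : lexLE b x y ∨ lexLE b y x := by
  simp only [lexLE_iff]
  exact le_total _ _

theorem lexLT_irrefl (x : ℕ → Fin b) : ¬ lexLT b x x := lt_irrefl (toLex x)

theorem lexLT.lexLE (h : lexLT b x y) : lexLE b x y := Or.inr h

theorem not_lexLE : ¬ lexLE b x y ↔ lexLT b y x := by
  rw [lexLE_iff, not_le]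
  rfl

theorem lexLE_of_forall_eq_imp_le (h : ∀ n, (∀ m < n, x m = y m) → x n ≤ y n) :
    lexLE b x y := by
  by_cases hxy : x = y
  · exact Or.inl hxy
  obtain ⟨hne, hmin⟩ : x (Nat.find (ne_iff.1 hxy)) ≠ y (Nat.find (ne_iff.1 hxy)) ∧
      ∀ m < Nat.find (ne_iff.1 hxy), x m = y m :=
    ⟨Nat.find_spec (ne_iff.1 hxy), fun m hm => not_not.1 (Nat.find_min _ hm)⟩
  exact Or.inr ⟨_, hmin, lt_of_le_of_ne (h _ hmin) hne⟩

end LexOrder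

section Words

variable {α : Type*} {b : ℕ}

def seqPrefix (x : ℕ → α) (k : ℕ) : List α := List.ofFn fun i : Fin k => x i

@[simp] theorem length_seqPrefix (x : ℕ → α) (k : ℕ) : (seqPrefix x k).length = k := by
  simp [seqPrefix]

theorem seqPrefix_succ (x : ℕ → α) (k : ℕ) : seqPrefix x (k + 1) = seqPrefix x k ++ [x k] := by
  rw [seqPrefix, seqPrefix, List.ofFn_succ_last]
  rfl

theorem getD_seqPrefix (x : ℕ → α) {n k : ℕ} (d : α) (h : n < k) :
    (seqPrefix x k).getD n d = x n := by
  simp only [seqPrefix, List.getD_eq_getElem?_getD, List.getElem?_ofFn]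
  simp [h]

theorem seqPrefix_eq_iff {x y : ℕ → α} {k : ℕ} :
    seqPrefix x k = seqPrefix y k ↔ ∀ m < k, x m = y m := by
  simp [seqPrefix, List.ofFn_inj, funext_iff, Fin.forall_iff]

theorem lexLT_of_mem_W_append {x y : ℕ → Fin b} {s : List (Fin b)} {d d' : Fin b}
    (hx : x ∈ W b (s ++ [d'])) (hy : y ∈ W b (s ++ [d])) (hd : d' < d) : lexLT b x y := by
  refine ⟨s.length, fun m hm => ?_, ?_⟩
  · rw [hx m (by simp; omega), hy m (by simp; omega)]
    simp [List.getElem_append_left hm]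
  · rw [hx _ (by simp), hy _ (by simp)]
    simpa using hd

theorem mem_W_iff_seqPrefix_eq {x : ℕ → Fin b} {s : List (Fin b)} :
    x ∈ W b s ↔ seqPrefix x s.length = s := by
  simp [W, seqPrefix, List.ext_get_iff, eq_comm]

theorem W_seqPrefix (x : ℕ → Fin b) (k : ℕ) : W b (seqPrefix x k) = PiNat.cylinder x k := by
  ext y
  simp [W, seqPrefix, PiNat.mem_cylinder_iff]

theorem isClopen_W (s : List (Fin b)) : IsClopen (W b s) := by
  have : W b s = ⋂ i : Fin s.length, (fun x : ℕ → Fin b => x i) ⁻¹' {s.get i} := by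
    ext x
    simp [W, Fin.forall_iff]
  rw [this]
  exact isClopen_iInter_of_finite fun i => (isClopen_discrete _).preimage (continuous_apply _)

theorem exists_W_seqPrefix_subset {U : Set (ℕ → Fin b)} {x : ℕ → Fin b} (hU : IsOpen U)
    (hx : x ∈ U) : ∃ k, W b (seqPrefix x k) ⊆ U := by
  obtain ⟨_, ⟨y, k, rfl⟩, hxy, hU⟩ :=
    (PiNat.isTopologicalBasis_cylinders fun _ => Fin b).exists_subset_of_mem_open hx hU
  exact ⟨k, by rwa [W_seqPrefix, PiNat.mem_cylinder_iff_eq.1 hxy]⟩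

end Words

section MaxW

variable {b : ℕ} [NeZero b] {x : ℕ → Fin b}

def maxW (s : List (Fin b)) : ℕ → Fin b := fun n => s.getD n ⊤

theorem isGreatestLex_W (s : List (Fin b)) : IsGreatestLex b (W b s) (maxW s) := by
  refine ⟨fun i hi => by simp [maxW, hi], fun y hy => lexLE_iff.2 (Pi.toLex_monotone fun n => ?_)⟩
  by_cases hn : n < s.length
  · simp [maxW, hn, hy n hn]
  · simp [maxW, not_lt.1 hn]

theorem maxW_mem_W_of_prefix {s w : List (Fin b)} (h : s <+: w) : maxW w ∈ W b s := by
  intro i hi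
  simp [maxW, h.getElem hi, List.getElem?_eq_getElem (hi.trans_le h.length_le)]

@[simp] theorem maxW_nil : maxW ([] : List (Fin b)) = ⊤ := rfl

theorem maxW_append_top (s : List (Fin b)) : maxW (s ++ [⊤]) = maxW s := by
  funext n
  by_cases h : n < s.length
  · exact List.getD_append _ _ _ _ h
  · simp only [maxW, List.getD_append_right _ _ _ _ (not_lt.1 h),
      List.getD_eq_default _ _ (not_lt.1 h)]
    rcases (not_lt.1 h).eq_or_lt with h' | h'
    · simp [← h']
    · exact List.getD_eq_default _ _ (by simp; omega)

theorem exists_maxW_eq_iff : (∃ s, maxW s = x) ↔ ∀ᶠ n in atTop, x n = ⊤ := by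
  constructor
  · rintro ⟨s, rfl⟩
    exact eventually_atTop.2 ⟨s.length, fun n hn => by simp [maxW, hn]⟩
  · intro h
    obtain ⟨N, hN⟩ := eventually_atTop.1 h
    refine ⟨seqPrefix x N, funext fun n => ?_⟩
    by_cases hn : n < N
    · simp [maxW, seqPrefix, hn]
    · simp [maxW, seqPrefix, not_lt.1 hn, hN n (not_lt.1 hn)]

theorem forall_le_apply_iff_eq_top : (∀ n, ∀ j : Fin b, j ≤ x n) ↔ x = ⊤ :=
  (forall_congr' fun _ => isTop_iff_eq_top).trans funext_iff.symm

theorem mem_AbSet_iff : x ∈ AbSet b ↔ (∀ᶠ n in atTop, x n = ⊤) ∧ x ≠ ⊤ := by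
  rw [eventually_atTop, ne_eq, ← forall_le_apply_iff_eq_top]
  exact and_congr_left' (exists_congr fun N => forall₂_congr fun n _ => isTop_iff_eq_top)

theorem lexLE_top (x : ℕ → Fin b) : lexLE b x ⊤ := lexLE_iff.2 (le_top (a := toLex x))

theorem top_lexLE_iff : lexLE b ⊤ x ↔ x = ⊤ := by
  rw [lexLE_iff, ← toLex_inj]
  exact top_le_iff

theorem mem_AbSet_iff_exists_maxW : x ∈ AbSet b ↔ (∃ s, maxW s = x) ∧ x ≠ ⊤ := by
  rw [mem_AbSet_iff, exists_maxW_eq_iff]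

theorem maxW_mem_AbSet_iff {s : List (Fin b)} : maxW s ∈ AbSet b ↔ maxW s ≠ ⊤ :=
  mem_AbSet_iff_exists_maxW.trans (and_iff_right ⟨s, rfl⟩)

theorem lexLT_top_of_ne_top (h : x ≠ ⊤) : lexLT b x ⊤ :=
  not_lexLE.1 (mt top_lexLE_iff.1 h)

theorem mem_Yset_iff {f : (ℕ → Fin b) → ℕ → Fin b} :
    x ∈ Yset b f ↔ (∃ s, IsGreatestLex b (f ⁻¹' W b s) x) ∧ x ≠ ⊤ := by
  rw [ne_eq, ← forall_le_apply_iff_eq_top]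
  rfl

end MaxW

section LexTopology

variable {b : ℕ}

theorem isOpen_setOf_lexLT_left (a : ℕ → Fin b) : IsOpen {x | lexLT b a x} := by
  refine isOpen_iff_forall_mem_open.2 fun x ⟨n, hpre, hn⟩ => ⟨PiNat.cylinder x (n + 1),
    fun y hy => ?_, PiNat.isOpen_cylinder _ _ _, PiNat.self_mem_cylinder _ _⟩
  have hy := PiNat.mem_cylinder_iff.1 hy
  refine ⟨n, fun m hm => (hpre m hm).trans (hy m (by omega)).symm, ?_⟩
  rw [hy n n.lt_succ_self]
  exact hn

theorem isOpen_setOf_lexLT_right (a : ℕ → Fin b) : IsOpen {x | lexLT b x a} := by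
  refine isOpen_iff_forall_mem_open.2 fun x ⟨n, hpre, hn⟩ => ⟨PiNat.cylinder x (n + 1),
    fun y hy => ?_, PiNat.isOpen_cylinder _ _ _, PiNat.self_mem_cylinder _ _⟩
  have hy := PiNat.mem_cylinder_iff.1 hy
  refine ⟨n, fun m hm => (hy m (by omega)).trans (hpre m hm), ?_⟩
  rw [hy n n.lt_succ_self]
  exact hn

theorem isClosed_setOf_lexLE_left (a : ℕ → Fin b) : IsClosed {x | lexLE b a x} := by
  simpa [← isOpen_compl_iff, Set.compl_ofPred, not_lexLE] using isOpen_setOf_lexLT_right a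

theorem isClosed_setOf_lexLE_right (a : ℕ → Fin b) : IsClosed {x | lexLE b x a} := by
  simpa [← isOpen_compl_iff, Set.compl_ofPred, not_lexLE] using isOpen_setOf_lexLT_left a

theorem isClopen_setOf_lexLE_maxW [NeZero b] (s : List (Fin b)) :
    IsClopen {x | lexLE b x (maxW s)} := by
  have : {x | lexLE b x (maxW s)} = W b s ∪ {x | lexLT b x (maxW s)} := by
    ext x
    refine ⟨Or.imp_left fun h => h ▸ (isGreatestLex_W s).1, ?_⟩
    rintro (hx | hx)
    exacts [(isGreatestLex_W s).2 x hx, Or.inr hx]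
  refine ⟨isClosed_setOf_lexLE_right _, ?_⟩
  rw [this]
  exact (isClopen_W s).isOpen.union (isOpen_setOf_lexLT_right _)

theorem exists_isGreatestLex {S : Set (ℕ → Fin b)} (hS : IsClosed S) (hne : S.Nonempty) :
    ∃ x, IsGreatestLex b S x := by
  let _ : TopologicalSpace (Lex (ℕ → Fin b)) := Pi.topologicalSpace
  have : ClosedIciTopology (Lex (ℕ → Fin b)) := ⟨fun a => isClosed_setOf_lexLE_left (ofLex a)⟩
  have hc : IsCompact (X := Lex (ℕ → Fin b)) S := hS.isCompact
  obtain ⟨x, hx⟩ := hc.exists_isGreatest hne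
  exact ⟨ofLex x, isGreatestLex_iff.2 hx⟩

end LexTopology

section CSur

variable {b : ℕ} {f g h : (ℕ → Fin b) → ℕ → Fin b} {x : ℕ → Fin b}

theorem CSur.comp (hf : CSur b f) (hg : CSur b g) : CSur b (f ∘ g) :=
  ⟨hf.1.comp hg.1, hf.2.1.comp hg.2.1, fun x y hxy => hf.2.2 _ _ (hg.2.2 x y hxy)⟩

theorem CSur.isGreatestLex_image (hg : CSur b g) {A : Set (ℕ → Fin b)}
    (hx : IsGreatestLex b (g ⁻¹' A) x) : IsGreatestLex b A (g x) := by
  refine ⟨hx.1, fun a ha => ?_⟩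
  obtain ⟨y, rfl⟩ := hg.2.1 a
  exact hg.2.2 _ _ (hx.2 y ha)

theorem CSur.lexLE_of_apply_eq (hh : CSur b h) {t : List (Fin b)} {y z : ℕ → Fin b}
    (hz : IsGreatestLex b (h ⁻¹' W b t) z) (hxy : h x = h y) (hxz : lexLE b x z) :
    lexLE b y z := by
  refine (lexLE_total y z).elim id fun hzy => hz.2 y ?_
  have : h z = h y := lexLE_antisymm (hh.2.2 _ _ hzy) (hxy ▸ hh.2.2 _ _ hxz)
  exact show h y ∈ W b t from this ▸ hz.1

theorem CSur.exists_comp_eq (hh : CSur b h) (hg : CSur b g)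
    (hfib : ∀ x y, h x = h y → g x = g y) : ∃ f, CSur b f ∧ f ∘ h = g := by
  have hfh : (g ∘ surjInv hh.2.1) ∘ h = g :=
    funext fun x => hfib _ _ (surjInv_eq hh.2.1 (h x))
  refine ⟨g ∘ surjInv hh.2.1, ⟨?_, fun y => ?_, fun z z' hzz' => ?_⟩, hfh⟩
  · rw [(hh.1.isClosedMap.isQuotientMap hh.1 hh.2.1).continuous_iff, hfh]
    exact hg.1
  · obtain ⟨x, rfl⟩ := hg.2.1 y
    exact ⟨h x, congrFun hfh x⟩
  · rcases lexLE_total (surjInv hh.2.1 z) (surjInv hh.2.1 z') with hle | hle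
    · exact hg.2.2 _ _ hle
    · have hz'z := hh.2.2 _ _ hle
      rw [surjInv_eq hh.2.1, surjInv_eq hh.2.1] at hz'z
      rw [lexLE_antisymm hzz' hz'z]
      exact lexLE_refl _

theorem Yset_comp_subset (hf : Continuous f) : Yset b (f ∘ h) ⊆ Yset b h := by
  rintro x ⟨⟨s, hx⟩, htop⟩
  obtain ⟨k, hk⟩ := exists_W_seqPrefix_subset ((isClopen_W s).isOpen.preimage hf) hx.1
  exact ⟨⟨seqPrefix (h x) k, mem_W_iff_seqPrefix_eq.2 (by simp),
    fun y hy => hx.2 y (hk hy)⟩, htop⟩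

theorem injOn_Yset (g : (ℕ → Fin b) → ℕ → Fin b) : Set.InjOn g (Yset b g) := by
  rintro x ⟨⟨s, hs⟩, -⟩ y ⟨⟨t, ht⟩, -⟩ hxy
  exact lexLE_antisymm (ht.2 x (show g x ∈ W b t from hxy ▸ ht.1))
    (hs.2 y (show g y ∈ W b s from hxy ▸ hs.1))

variable [NeZero b]

theorem exists_maxW_eq_of_isGreatestLex {U : Set (ℕ → Fin b)} (hU : IsOpen U)
    (hx : IsGreatestLex b U x) : ∃ s, maxW s = x := by
  obtain ⟨k, hk⟩ := exists_W_seqPrefix_subset hU hx.1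
  exact ⟨_, lexLE_antisymm (hx.2 _ (hk (isGreatestLex_W _).1))
    ((isGreatestLex_W _).2 x (mem_W_iff_seqPrefix_eq.2 (by simp)))⟩

theorem Yset_subset_AbSet (hg : Continuous g) : Yset b g ⊆ AbSet b := by
  rintro x ⟨⟨s, hx⟩, htop⟩
  rw [mem_AbSet_iff_exists_maxW, ne_eq, ← forall_le_apply_iff_eq_top]
  exact ⟨exists_maxW_eq_of_isGreatestLex ((isClopen_W s).isOpen.preimage hg) hx, htop⟩

theorem CSur.map_top (hg : CSur b g) : g ⊤ = ⊤ := by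
  obtain ⟨y, hy⟩ := hg.2.1 ⊤
  exact top_lexLE_iff.1 (hy ▸ hg.2.2 y ⊤ (lexLE_top y))

theorem CSur.apply_eq_maxW (hg : CSur b g) {s : List (Fin b)}
    (hx : IsGreatestLex b (g ⁻¹' W b s) x) : g x = maxW s :=
  (hg.isGreatestLex_image hx).unique (isGreatestLex_W s)

theorem CSur.apply_mem_AbSet (hg : CSur b g) (hx : x ∈ Yset b g) : g x ∈ AbSet b := by
  obtain ⟨⟨s, hs⟩, htop⟩ := mem_Yset_iff.1 hx
  rw [hg.apply_eq_maxW hs, maxW_mem_AbSet_iff]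
  refine fun hs_top => htop (top_lexLE_iff.1 (hs.2 ⊤ ?_))
  rw [Set.mem_preimage, hg.map_top, ← hs_top]
  exact (isGreatestLex_W s).1

theorem CSur.surjOn_Yset (hg : CSur b g) : Set.SurjOn g (Yset b g) (AbSet b) := by
  intro a ha
  obtain ⟨⟨s, rfl⟩, htop⟩ := mem_AbSet_iff_exists_maxW.1 ha
  obtain ⟨y, hy⟩ := hg.2.1 (maxW s)
  obtain ⟨x, hx⟩ := exists_isGreatestLex ((isClopen_W s).isClosed.preimage hg.1)
    ⟨y, show g y ∈ W b s from hy ▸ (isGreatestLex_W s).1⟩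
  refine ⟨x, mem_Yset_iff.2 ⟨⟨s, hx⟩, fun hx_top => htop ?_⟩, hg.apply_eq_maxW hx⟩
  rw [← hg.apply_eq_maxW hx, hx_top, hg.map_top]

end CSur

section Rat

variable {b : ℕ}

def lexSet (Z : Set (ℕ → Fin b)) : Set (Lex (ℕ → Fin b)) := ofLex ⁻¹' Z

theorem orderIsoQ_iff {Z : Set (ℕ → Fin b)} : OrderIsoQ b Z ↔ Nonempty (ℚ ≃o lexSet Z) :=
  ⟨fun ⟨e, he⟩ => ⟨⟨e, fun {_ _} => lexLE_iff.symm.trans (he _ _).symm⟩⟩,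
    fun ⟨e⟩ => ⟨e.toEquiv, fun _ _ => e.le_iff_le.symm.trans lexLE_iff.symm⟩⟩

variable [NeZero b]

theorem zero_lt_top_of_two_le (hb : 2 ≤ b) : (0 : Fin b) < ⊤ := by
  rw [Fin.lt_def, Fin.val_top]
  simp only [Fin.val_zero]
  omega

theorem update_mem_AbSet (hb : 2 ≤ b) {y : ℕ → Fin b} (hy : ∀ᶠ n in atTop, y n = ⊤) (M : ℕ) :
    update y M 0 ∈ AbSet b := by
  refine mem_AbSet_iff.2 ⟨?_, fun h => (zero_lt_top_of_two_le hb).ne ?_⟩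
  · filter_upwards [hy, eventually_ne_atTop M] with n hn hnM
    rwa [update_of_ne hnM]
  · simpa using congrFun h M

theorem exists_mem_AbSet_between (hb : 2 ≤ b) {x y : ℕ → Fin b} (hy : ∀ᶠ n in atTop, y n = ⊤)
    (hxy : lexLT b x y) : ∃ z ∈ AbSet b, lexLT b x z ∧ lexLT b z y := by
  obtain ⟨n, hpre, hn⟩ := hxy
  obtain ⟨M, hyM, hnM⟩ := (hy.and (eventually_gt_atTop n)).exists
  refine ⟨update y M 0, update_mem_AbSet hb hy M, ⟨n, fun m hm => ?_, ?_⟩, ?_⟩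
  · rw [update_of_ne (by omega)]
    exact hpre m hm
  · rwa [update_of_ne (by omega)]
  · rw [lexLT_iff, Pi.toLex_update_lt_self_iff, hyM]
    exact zero_lt_top_of_two_le hb

theorem nonempty_orderIso_AbSet_rat (hb : 2 ≤ b) : Nonempty (lexSet (AbSet b) ≃o ℚ) := by
  have : Countable (lexSet (AbSet b)) := by
    refine Set.Countable.to_subtype ((Set.countable_range (toLex ∘ maxW)).mono fun a ha => ?_)
    obtain ⟨s, hs⟩ := (mem_AbSet_iff_exists_maxW.1 ha).1
    exact ⟨s, congrArg toLex hs⟩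
  have : DenselyOrdered (lexSet (AbSet b)) := ⟨fun x y hxy => by
    obtain ⟨z, hz, hxz, hzy⟩ := exists_mem_AbSet_between hb (mem_AbSet_iff.1 y.2).1 hxy
    exact ⟨⟨toLex z, hz⟩, hxz, hzy⟩⟩
  have : NoMaxOrder (lexSet (AbSet b)) := ⟨fun x => by
    obtain ⟨z, hz, hxz, -⟩ := exists_mem_AbSet_between hb (Eventually.of_forall fun _ => rfl)
      (lexLT_top_of_ne_top (mem_AbSet_iff.1 x.2).2)
    exact ⟨⟨toLex z, hz⟩, hxz⟩⟩
  have : NoMinOrder (lexSet (AbSet b)) := ⟨fun x => by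
    have hx : ∀ᶠ n in atTop, ofLex x.1 n = ⊤ := (mem_AbSet_iff.1 x.2).1
    obtain ⟨M, hM⟩ := hx.exists
    refine ⟨⟨toLex (update (ofLex x.1) M 0), update_mem_AbSet hb hx M⟩, ?_⟩
    show toLex (update (ofLex x.1) M 0) < toLex (ofLex x.1)
    rw [Pi.toLex_update_lt_self_iff, hM]
    exact zero_lt_top_of_two_le hb⟩
  have : Nonempty (lexSet (AbSet b)) :=
    ⟨⟨toLex (update ⊤ 0 0), update_mem_AbSet hb (Eventually.of_forall fun _ => rfl) 0⟩⟩
  exact Order.iso_of_countable_dense _ _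

theorem CSur.nonempty_orderIso_Yset {g : (ℕ → Fin b) → ℕ → Fin b} (hg : CSur b g) :
    Nonempty (lexSet (Yset b g) ≃o lexSet (AbSet b)) := by
  let F : lexSet (Yset b g) → lexSet (AbSet b) :=
    fun x => ⟨toLex (g (ofLex x.1)), hg.apply_mem_AbSet x.2⟩
  refine ⟨StrictMono.orderIsoOfSurjective F (fun x y hxy => ?_) fun a => ?_⟩
  · refine (lexLE_iff.1 (hg.2.2 _ _ (lexLE_iff.2 hxy.le))).lt_of_ne fun h => hxy.ne ?_
    exact Subtype.ext (congrArg toLex (injOn_Yset g x.2 y.2 (toLex_inj.1 h)))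
  · obtain ⟨x, hx, hgx⟩ := hg.surjOn_Yset a.2
    exact ⟨⟨toLex x, hx⟩, Subtype.ext (congrArg toLex hgx)⟩

end Rat

theorem CSur.orderIsoQ_Yset {b : ℕ} {g : (ℕ → Fin b) → ℕ → Fin b} (hb : 2 ≤ b) (hg : CSur b g) :
    OrderIsoQ b (Yset b g) := by
  have : NeZero b := ⟨by omega⟩
  obtain ⟨e₁⟩ := hg.nonempty_orderIso_Yset
  obtain ⟨e₂⟩ := nonempty_orderIso_AbSet_rat hb
  exact orderIsoQ_iff.2 ⟨e₂.symm.trans e₁.symm⟩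

section DigitMap

variable {b : ℕ} [NeZero b] (φ : (ℕ → Fin b) → ℕ → Fin b)

def StrictMonoOnMaxW : Prop :=
  ∀ s t : List (Fin b), lexLT b (maxW s) (maxW t) → lexLT b (φ (maxW s)) (φ (maxW t))

-- `sInf ∅ = ⊤`, but along `digitWord` the set is never empty: see `lexLE_nextDigit`.
noncomputable def nextDigit (x : ℕ → Fin b) (s : List (Fin b)) : Fin b :=
  sInf {d | lexLE b x (φ (maxW (s ++ [d])))}

noncomputable def digitWord (x : ℕ → Fin b) : ℕ → List (Fin b)
  | 0 => []
  | k + 1 => digitWord x k ++ [nextDigit φ x (digitWord x k)]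

noncomputable def digitMap (x : ℕ → Fin b) : ℕ → Fin b := fun n => nextDigit φ x (digitWord φ x n)

theorem digitWord_eq_seqPrefix (x : ℕ → Fin b) (k : ℕ) :
    digitWord φ x k = seqPrefix (digitMap φ x) k := by
  induction k with
  | zero => rfl
  | succ k ih => rw [digitWord, seqPrefix_succ, ← ih, digitMap]

theorem digitMap_mem_W_iff {x : ℕ → Fin b} {s : List (Fin b)} :
    digitMap φ x ∈ W b s ↔ digitWord φ x s.length = s := by
  rw [mem_W_iff_seqPrefix_eq, digitWord_eq_seqPrefix]

variable {φ}

theorem lexLE_nextDigit {x : ℕ → Fin b} {s : List (Fin b)} (h : lexLE b x (φ (maxW s))) :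
    lexLE b x (φ (maxW (s ++ [nextDigit φ x s]))) :=
  csInf_mem (s := {d | lexLE b x (φ (maxW (s ++ [d])))})
    ⟨⊤, show lexLE b x (φ (maxW (s ++ [⊤]))) by rwa [maxW_append_top]⟩

theorem lexLE_digitWord (hφ_top : φ ⊤ = ⊤) (x : ℕ → Fin b) (k : ℕ) :
    lexLE b x (φ (maxW (digitWord φ x k))) := by
  induction k with
  | zero => simpa [digitWord, hφ_top] using lexLE_top x
  | succ k ih => exact lexLE_nextDigit ih

theorem StrictMonoOnMaxW.lexLE_map (hφ : StrictMonoOnMaxW φ) {s t : List (Fin b)}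
    (h : lexLE b (maxW s) (maxW t)) : lexLE b (φ (maxW s)) (φ (maxW t)) :=
  h.elim (fun h => Or.inl (congrArg φ h)) fun h => (hφ s t h).lexLE

theorem digitWord_map_maxW (hφ : StrictMonoOnMaxW φ) {s w : List (Fin b)} (hsw : s <+: w) :
    digitWord φ (φ (maxW w)) s.length = s := by
  induction s using List.reverseRecOn with
  | nil => rfl
  | append_singleton s d ih =>
    rw [List.length_append, List.length_singleton, digitWord,
      ih ((List.prefix_append _ _).trans hsw)]
    refine congrArg (s ++ [·]) (le_antisymm (sInf_le ?_) (le_sInf fun d' hd' => ?_))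
    · exact hφ.lexLE_map ((isGreatestLex_W _).2 _ (maxW_mem_W_of_prefix hsw))
    · refine not_lt.1 fun hd => not_lexLE.2 (hφ _ _ ?_) hd'
      exact lexLT_of_mem_W_append (isGreatestLex_W _).1 (maxW_mem_W_of_prefix hsw) hd

theorem isGreatestLex_preimage_W_digitMap (hφ_top : φ ⊤ = ⊤) (hφ : StrictMonoOnMaxW φ)
    (s : List (Fin b)) : IsGreatestLex b (digitMap φ ⁻¹' W b s) (φ (maxW s)) := by
  refine ⟨(digitMap_mem_W_iff φ).2 (digitWord_map_maxW hφ (List.prefix_refl s)),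
    fun x hx => ?_⟩
  simpa [(digitMap_mem_W_iff φ).1 hx] using lexLE_digitWord hφ_top x s.length

theorem digitMap_eq_of_forall_lexLE_iff {x y : ℕ → Fin b}
    (h : ∀ s, lexLE b x (φ (maxW s)) ↔ lexLE b y (φ (maxW s))) : digitMap φ x = digitMap φ y := by
  have hnext : ∀ s, nextDigit φ x s = nextDigit φ y s := fun s => by simp only [nextDigit, h]
  have hword : ∀ k, digitWord φ x k = digitWord φ y k := fun k => by
    induction k with
    | zero => rfl
    | succ k ih => rw [digitWord, digitWord, ih, hnext]
  funext n
  rw [digitMap, digitMap, hword, hnext]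

theorem digitMap_mono {x y : ℕ → Fin b} (hxy : lexLE b x y) :
    lexLE b (digitMap φ x) (digitMap φ y) := by
  refine lexLE_of_forall_eq_imp_le fun n hpre => ?_
  have : digitWord φ x n = digitWord φ y n := by
    rw [digitWord_eq_seqPrefix, digitWord_eq_seqPrefix, seqPrefix_eq_iff]
    exact hpre
  simp only [digitMap, nextDigit, this]
  exact sInf_le_sInf fun d hd => lexLE_trans hxy hd

theorem isLocallyConstant_nextDigit (hφ_range : Set.MapsTo φ (Set.range maxW) (Set.range maxW))
    (s : List (Fin b)) : IsLocallyConstant fun x => nextDigit φ x s := by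
  refine (IsLocallyConstant.iff_eventually_eq _).2 fun x => ?_
  have : ∀ d, ∀ᶠ y in 𝓝 x,
      lexLE b y (φ (maxW (s ++ [d]))) ↔ lexLE b x (φ (maxW (s ++ [d]))) := by
    intro d
    obtain ⟨t, ht⟩ := hφ_range (Set.mem_range_self (s ++ [d]))
    have hC := isClopen_setOf_lexLE_maxW t
    rw [ht] at hC
    by_cases hx : lexLE b x (φ (maxW (s ++ [d])))
    · filter_upwards [hC.isOpen.mem_nhds hx] with y hy using iff_of_true hy hx
    · filter_upwards [hC.compl.isOpen.mem_nhds hx] with y hy using iff_of_false hy hx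
  filter_upwards [eventually_all.2 this] with y hy
  simp only [nextDigit, hy]

theorem isLocallyConstant_digitWord (hφ_range : Set.MapsTo φ (Set.range maxW) (Set.range maxW))
    (k : ℕ) : IsLocallyConstant fun x => digitWord φ x k := by
  induction k with
  | zero => exact IsLocallyConstant.const _
  | succ k ih =>
    refine (IsLocallyConstant.iff_eventually_eq _).2 fun x => ?_
    filter_upwards [ih.eventually_eq x,
      (isLocallyConstant_nextDigit hφ_range (digitWord φ x k)).eventually_eq x] with y h1 h2
    simp only [digitWord, h1, h2]

theorem continuous_digitMap (hφ_range : Set.MapsTo φ (Set.range maxW) (Set.range maxW)) :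
    Continuous (digitMap φ) := by
  refine continuous_pi fun n => ?_
  have : (fun x => digitMap φ x n) = fun x => (digitWord φ x (n + 1)).getD n ⊤ := by
    funext x
    rw [digitWord_eq_seqPrefix, getD_seqPrefix _ _ n.lt_succ_self]
  rw [this]
  exact ((isLocallyConstant_digitWord hφ_range (n + 1)).comp fun w => w.getD n ⊤).continuous

theorem surjective_digitMap (hφ : StrictMonoOnMaxW φ)
    (hφ_range : Set.MapsTo φ (Set.range maxW) (Set.range maxW)) : Surjective (digitMap φ) := by
  intro y
  let V : ℕ → Set (ℕ → Fin b) := fun k => {x | digitWord φ x k = seqPrefix y k}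
  have hV : ∀ k, V k = {x | ∀ m < k, digitMap φ x m = y m} := fun k => by
    simp only [V, digitWord_eq_seqPrefix, seqPrefix_eq_iff]
  have hV_closed : ∀ k, IsClosed (V k) := fun k =>
    ((isLocallyConstant_digitWord hφ_range k).isClopen_fiber _).isClosed
  have hV_ne : ∀ k, (V k).Nonempty := fun k => by
    have := digitWord_map_maxW hφ (List.prefix_refl (seqPrefix y k))
    rw [length_seqPrefix] at this
    exact ⟨_, this⟩
  have hV_anti : ∀ k, V (k + 1) ⊆ V k := fun k x hx => by
    rw [hV] at hx ⊢
    exact fun m hm => hx m (by omega)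
  obtain ⟨x, hx⟩ := IsCompact.nonempty_iInter_of_sequence_nonempty_isCompact_isClosed V hV_anti
    hV_ne (hV_closed 0).isCompact hV_closed
  refine ⟨x, funext fun n => ?_⟩
  have := Set.mem_iInter.1 hx (n + 1)
  rw [hV] at this
  exact this n (by omega)

theorem cSur_digitMap (hφ : StrictMonoOnMaxW φ)
    (hφ_range : Set.MapsTo φ (Set.range maxW) (Set.range maxW)) : CSur b (digitMap φ) :=
  ⟨continuous_digitMap hφ_range, surjective_digitMap hφ hφ_range, fun _ _ => digitMap_mono⟩

theorem Yset_digitMap (hφ_top : φ ⊤ = ⊤) (hφ : StrictMonoOnMaxW φ) :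
    Yset b (digitMap φ) = φ '' AbSet b := by
  ext x
  rw [mem_Yset_iff]
  constructor
  · rintro ⟨⟨s, hs⟩, htop⟩
    have hx := hs.unique (isGreatestLex_preimage_W_digitMap hφ_top hφ s)
    refine ⟨maxW s, mem_AbSet_iff_exists_maxW.2 ⟨⟨s, rfl⟩, fun h => htop ?_⟩, hx.symm⟩
    rw [hx, h, hφ_top]
  · rintro ⟨_, ha, rfl⟩
    obtain ⟨⟨s, rfl⟩, htop⟩ := mem_AbSet_iff_exists_maxW.1 ha
    refine ⟨⟨s, isGreatestLex_preimage_W_digitMap hφ_top hφ s⟩, fun h => ?_⟩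
    have := hφ s [] (by simpa using lexLT_top_of_ne_top htop)
    rw [h, maxW_nil, hφ_top] at this
    exact lexLT_irrefl _ this

end DigitMap

section Extension

variable {b : ℕ} [NeZero b] {Z : Set (ℕ → Fin b)}

open Classical in
noncomputable def extendTop (e : lexSet (AbSet b) ≃o lexSet Z) (a : ℕ → Fin b) : ℕ → Fin b :=
  if ha : a ∈ AbSet b then ofLex (e ⟨toLex a, ha⟩).1 else ⊤

variable (e : lexSet (AbSet b) ≃o lexSet Z)

theorem extendTop_of_mem {a : ℕ → Fin b} (ha : a ∈ AbSet b) :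
    extendTop e a = ofLex (e ⟨toLex a, ha⟩).1 :=
  dif_pos ha

theorem extendTop_top : extendTop e ⊤ = ⊤ :=
  dif_neg fun h => (mem_AbSet_iff.1 h).2 rfl

theorem image_extendTop : extendTop e '' AbSet b = Z := by
  ext z
  constructor
  · rintro ⟨a, ha, rfl⟩
    rw [extendTop_of_mem e ha]
    exact (e _).2
  · intro hz
    obtain ⟨a, ha⟩ := e.surjective ⟨toLex z, hz⟩
    refine ⟨ofLex a.1, a.2, ?_⟩
    rw [extendTop_of_mem e (a := ofLex a.1) a.2]
    exact congrArg (fun q => ofLex q.1) ha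

theorem extendTop_maxW_eq_top_or_mem (s : List (Fin b)) :
    extendTop e (maxW s) = ⊤ ∨ extendTop e (maxW s) ∈ Z := by
  by_cases hs : maxW s ∈ AbSet b
  · rw [extendTop_of_mem e hs]
    exact Or.inr (e _).2
  · exact Or.inl (dif_neg hs)

theorem strictMonoOnMaxW_extendTop (hZ : ∀ z ∈ Z, z ≠ ⊤) : StrictMonoOnMaxW (extendTop e) := by
  intro s t hst
  have hs : maxW s ∈ AbSet b := maxW_mem_AbSet_iff.2 fun h =>
    not_lexLE.2 hst (h ▸ lexLE_top (maxW t))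
  rw [extendTop_of_mem e hs]
  by_cases ht : maxW t ∈ AbSet b
  · rw [extendTop_of_mem e ht]
    exact e.strictMono (show toLex (maxW s) < toLex (maxW t) from hst)
  · rw [not_not.1 (mt maxW_mem_AbSet_iff.2 ht), extendTop_top]
    exact lexLT_top_of_ne_top (hZ _ (e _).2)

end Extension

theorem exists_cSur_eq_Yset_comp {b : ℕ} [NeZero b] {h : (ℕ → Fin b) → ℕ → Fin b}
    (hh : CSur b h) {Z : Set (ℕ → Fin b)} (hZ : Z ⊆ Yset b h)
    (e : lexSet (AbSet b) ≃o lexSet Z) : ∃ f, CSur b f ∧ Z = Yset b (f ∘ h) := by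
  have hφ := strictMonoOnMaxW_extendTop e fun z hz => (mem_Yset_iff.1 (hZ hz)).2
  have hφ_range : Set.MapsTo (extendTop e) (Set.range maxW) (Set.range maxW) := by
    rintro _ ⟨s, rfl⟩
    exact (extendTop_maxW_eq_top_or_mem e s).elim (fun htop => ⟨[], htop.symm⟩)
      fun hz => (mem_AbSet_iff_exists_maxW.1 (Yset_subset_AbSet hh.1 (hZ hz))).1
  have hfib : ∀ x y, h x = h y → digitMap (extendTop e) x = digitMap (extendTop e) y :=
    fun x y hxy => digitMap_eq_of_forall_lexLE_iff fun s => by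
      rcases extendTop_maxW_eq_top_or_mem e s with htop | hz
      · simp only [htop, lexLE_top]
      · obtain ⟨⟨t, ht⟩, -⟩ := hZ hz
        exact ⟨hh.lexLE_of_apply_eq ht hxy, hh.lexLE_of_apply_eq ht hxy.symm⟩
  obtain ⟨f, hf, hfh⟩ := hh.exists_comp_eq (cSur_digitMap hφ hφ_range) hfib
  exact ⟨f, hf, by rw [hfh, Yset_digitMap (extendTop_top e) hφ, image_extendTop]⟩

/-- for `h ∈ C↑_sur(b^ω)`, the subsets of `Y_h` order isomorphic to `ℚ`
are exactly the sets `Y_{f∘h}`, `f ∈ C↑_sur(b^ω)`. -/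
theorem iso_subsets_of_Yset_eq_compositions (b : ℕ) (hb : 2 ≤ b)
    (h : (ℕ → Fin b) → (ℕ → Fin b)) (hh : CSur b h) :
    {Z : Set (ℕ → Fin b) | Z ⊆ Yset b h ∧ OrderIsoQ b Z} =
      {Z | ∃ f, CSur b f ∧ Z = Yset b (f ∘ h)} := by
  have : NeZero b := ⟨by omega⟩
  ext Z
  constructor
  · rintro ⟨hZ, hZ_iso⟩
    obtain ⟨e₁⟩ := orderIsoQ_iff.1 hZ_iso
    obtain ⟨e₂⟩ := nonempty_orderIso_AbSet_rat hb
    exact exists_cSur_eq_Yset_comp hh hZ (e₂.trans e₁)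
  · rintro ⟨f, hf, rfl⟩
    exact ⟨Yset_comp_subset hf.1, (hf.comp hh).orderIsoQ_Yset hb⟩
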